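/- Let H ∈ ℝ^{n×n²} be such that all its frontal-slice blocks are of the form HᵢQ with Hᵢ skew-symmetric and Q symmetric positive definite, i.e., H = [H₁Q, ..., HₙQ]. Let A = (J - R)Q with J skew-symmetric and R symmetric positive semi-definite (R ⪰ 0). Then for the system ẋ = Ax + H(x⊗x), the function V(x) = ½xᵀQx is non-increasing along all trajectories: d/dt V(x(t)) = -x(t)ᵀQRQx(t) ≤ 0. If additionally R = 0, then V is constant along all trajectories. -/

import Mathlib

/-!
Along a trajectory, `d/dt ½ xᵀQx = (Qx)ᵀ ẋ` because `Q` is symmetric. Writing `y = Qx`, the vector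
field is `(J - R) y + Σᵢ xᵢ Hᵢ y`, and every skew-symmetric matrix `S` has `yᵀ S y = 0`, so only
the dissipative term survives: `(Qx)ᵀ ẋ = -yᵀ R y ≤ 0`. When `R = 0` the derivative vanishes
identically and `V` is constant.
-/

open Matrix

section Algebra

variable {m α : Type*} [Fintype m] [CommRing α]

theorem dotProduct_mulVec_self_eq_zero_of_transpose_eq_neg [IsAddTorsionFree α]
    {A : Matrix m m α} (hA : Aᵀ = -A) (y : m → α) : y ⬝ᵥ A *ᵥ y = 0 := by
  refine self_eq_neg.mp ?_
  calc y ⬝ᵥ A *ᵥ y = Aᵀ *ᵥ y ⬝ᵥ y := by rw [dotProduct_mulVec, mulVec_transpose]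
    _ = -(y ⬝ᵥ A *ᵥ y) := by rw [hA, neg_mulVec, neg_dotProduct, dotProduct_comm]

theorem dotProduct_mulVec_of_transpose_eq_self {Q : Matrix m m α} (hQ : Qᵀ = Q) (v w : m → α) :
    v ⬝ᵥ Q *ᵥ w = Q *ᵥ v ⬝ᵥ w := by
  rw [dotProduct_mulVec, ← mulVec_transpose, hQ]

theorem mulVec_dotProduct_vectorField_eq_neg_dissipation [IsAddTorsionFree α]
    {J R Q : Matrix m m α} {Hs : m → Matrix m m α} (hJ : Jᵀ = -J)
    (hskew : ∀ i, (Hs i)ᵀ = -(Hs i)) (hQ : Qᵀ = Q)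
    (y : m → α) :
    Q *ᵥ y ⬝ᵥ (((J - R) * Q) *ᵥ y + ∑ i, y i • (Hs i * Q) *ᵥ y) = -(y ⬝ᵥ (Q * R * Q) *ᵥ y) := by
  have hJ0 : Q *ᵥ y ⬝ᵥ J *ᵥ (Q *ᵥ y) = 0 :=
    dotProduct_mulVec_self_eq_zero_of_transpose_eq_neg hJ _
  have hH0 : ∀ i, Q *ᵥ y ⬝ᵥ Hs i *ᵥ (Q *ᵥ y) = 0 := fun i =>
    dotProduct_mulVec_self_eq_zero_of_transpose_eq_neg (hskew i) _
  simp only [sub_mul, sub_mulVec, ← mulVec_mulVec, dotProduct_add, dotProduct_sub, dotProduct_sum,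
    dotProduct_smul, hJ0, hH0, smul_zero, Finset.sum_const_zero, add_zero, zero_sub,
    mul_assoc Q R Q]
  rw [dotProduct_mulVec_of_transpose_eq_self hQ]

end Algebra

section Calculus

variable {m 𝕜 : Type*} [Fintype m] [NontriviallyNormedField 𝕜] {u w : 𝕜 → m → 𝕜}
  {u' w' : m → 𝕜} {t : 𝕜}

theorem HasDerivAt.dotProduct (hu : HasDerivAt u u' t) (hw : HasDerivAt w w' t) :
    HasDerivAt (fun s => u s ⬝ᵥ w s) (u' ⬝ᵥ w t + u t ⬝ᵥ w') t := by
  have hui := hasDerivAt_pi.mp hu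
  have hwi := hasDerivAt_pi.mp hw
  simp only [_root_.dotProduct, ← Finset.sum_add_distrib]
  exact HasDerivAt.fun_sum fun i _ => (hui i).mul (hwi i)

theorem HasDerivAt.matrix_mulVec (A : Matrix m m 𝕜) (hu : HasDerivAt u u' t) :
    HasDerivAt (fun s => A *ᵥ u s) (A *ᵥ u') t := by
  have hui := hasDerivAt_pi.mp hu
  exact hasDerivAt_pi.mpr fun i => HasDerivAt.fun_sum fun j _ => (hui j).const_mul (A i j)

end Calculus

theorem hasDerivAt_half_quadForm {m : Type*} [Fintype m] {Q : Matrix m m ℝ} (hQ : Qᵀ = Q)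
    {x : ℝ → m → ℝ} {v : m → ℝ} {t : ℝ} (hx : HasDerivAt x v t) :
    HasDerivAt (fun s => (1 / 2 : ℝ) * (x s ⬝ᵥ Q *ᵥ x s)) (Q *ᵥ x t ⬝ᵥ v) t := by
  refine ((hx.dotProduct (hx.matrix_mulVec Q)).const_mul (1 / 2 : ℝ)).congr_deriv ?_
  rw [dotProduct_mulVec_of_transpose_eq_self hQ (x t), dotProduct_comm v]
  ring

/-- For `ẋ = (J-R)Qx + Σᵢ xᵢHᵢQx` with `J` skew, `R ⪰ 0` symmetric, `Q ≻ 0`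
symmetric, and `Hᵢ` skew-symmetric, the function `V(x)=½xᵀQx` satisfies
`d/dt V(x(t)) = -x(t)ᵀQRQx(t) ≤ 0`; if `R = 0` then `V` is constant along
trajectories. -/
theorem stmt_15 (n : ℕ) (J R Q : Matrix (Fin n) (Fin n) ℝ)
    (hJ : Jᵀ = -J) (hR : R.PosSemidef) (hQ : Q.PosDef)
    (Hs : Fin n → Matrix (Fin n) (Fin n) ℝ) (hskew : ∀ i, (Hs i)ᵀ = -(Hs i))
    (x : ℝ → Fin n → ℝ)
    (hx : ∀ t, HasDerivAt x
      (((J - R) * Q).mulVec (x t) + ∑ i, x t i • (Hs i * Q).mulVec (x t)) t) :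
    (∀ t, deriv (fun s => (1 / 2 : ℝ) * (x s ⬝ᵥ Q.mulVec (x s))) t
        = -(x t ⬝ᵥ (Q * R * Q).mulVec (x t)) ∧
      deriv (fun s => (1 / 2 : ℝ) * (x s ⬝ᵥ Q.mulVec (x s))) t ≤ 0) ∧
    (R = 0 → ∀ t₁ t₂ : ℝ,
      (1 / 2 : ℝ) * (x t₁ ⬝ᵥ Q.mulVec (x t₁))
        = (1 / 2 : ℝ) * (x t₂ ⬝ᵥ Q.mulVec (x t₂))) := by
  have hQs : Qᵀ = Q := hQ.isHermitian
  have hV : ∀ t, HasDerivAt (fun s => (1 / 2 : ℝ) * (x s ⬝ᵥ Q *ᵥ x s))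
      (-(x t ⬝ᵥ (Q * R * Q) *ᵥ x t)) t := fun t =>
    (hasDerivAt_half_quadForm hQs (hx t)).congr_deriv
      (mulVec_dotProduct_vectorField_eq_neg_dissipation hJ hskew hQs (x t))
  have hdissip : ∀ t, 0 ≤ x t ⬝ᵥ (Q * R * Q) *ᵥ x t := fun t => by
    simpa [mul_assoc, ← mulVec_mulVec, dotProduct_mulVec_of_transpose_eq_self hQs (x t)]
      using hR.dotProduct_mulVec_nonneg (Q *ᵥ x t)
  refine ⟨fun t => ⟨(hV t).deriv, (hV t).deriv ▸ neg_nonpos.mpr (hdissip t)⟩, fun hR0 => ?_⟩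
  exact is_const_of_deriv_eq_zero (fun s => (hV s).differentiableAt)
    (fun s => by rw [(hV s).deriv, hR0]; simp)
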